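/- For all natural k and n, ỹ_{2n+1} > ỹ_{2k}, i.e., every odd-indexed term of the sequence ỹ exceeds every even-indexed term. -/

import Mathlib

/-! Writing `r = -φ⁻¹`, the recurrence says `ỹ (m + 2) = ỹ (m + 1) - (c / 2) r ^ m`, so
`ỹ (m + 1) = L + b r ^ m` for a constant `L` and `b = (c / 2) / (1 - r) > 0`. Since `r < 0`,
odd-indexed terms of `ỹ` lie above `L` and even-indexed ones below it. -/

noncomputable def c : ℝ := 4 / (9 - Real.sqrt 5)
noncomputable def φ : ℝ := (1 + Real.sqrt 5) / 2

theorem c_pos : 0 < c := by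
  have : Real.sqrt 5 < 9 := by
    rw [Real.sqrt_lt' (by norm_num)]
    norm_num
  unfold c
  exact div_pos (by norm_num) (by linarith)

theorem φ_pos : 0 < φ := by
  unfold φ
  positivity

theorem neg_one_pow_succ_mul_zpow_one_sub {K : Type*} [DivisionRing K] (x : K) (m : ℕ) :
    (-1 : K) ^ (m + 1) * x ^ ((1 : ℤ) - ((m + 1 : ℕ) : ℤ)) = -(-x⁻¹) ^ m := by
  have : (1 : ℤ) - ((m + 1 : ℕ) : ℤ) = -(m : ℤ) := by push_cast; ring
  rw [this, zpow_neg, zpow_natCast, ← inv_pow, neg_pow x⁻¹, pow_succ, mul_neg_one, neg_mul]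

section GeometricDecrements

variable {z : ℕ → ℝ} {a r : ℝ}

theorem eq_sub_add_mul_pow_of_succ_eq_sub_mul_pow (hr : r ≠ 1)
    (h : ∀ m, z (m + 1) = z m - a * r ^ m) (m : ℕ) :
    z m = z 0 - a / (1 - r) + a / (1 - r) * r ^ m := by
  have h1r : 1 - r ≠ 0 := sub_ne_zero.2 (Ne.symm hr)
  induction m with
  | zero => ring
  | succ m ih =>
    rw [h, ih]
    field_simp
    ring

theorem lt_of_succ_eq_sub_mul_pow_of_neg (ha : 0 < a) (hr : r < 0)
    (h : ∀ m, z (m + 1) = z m - a * r ^ m) (j k : ℕ) :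
    z (2 * j + 1) < z (2 * k) := by
  have hb : 0 < a / (1 - r) := div_pos ha (by linarith)
  have hodd : r ^ (2 * j + 1) < 0 := Odd.pow_neg (odd_two_mul_add_one j) hr
  have heven : 0 ≤ r ^ (2 * k) := (even_two_mul k).pow_nonneg r
  rw [eq_sub_add_mul_pow_of_succ_eq_sub_mul_pow (hr.trans one_pos).ne h,
    eq_sub_add_mul_pow_of_succ_eq_sub_mul_pow (hr.trans one_pos).ne h (2 * k)]
  nlinarith

end GeometricDecrements

theorem stmt6_general (y : ℕ → ℝ)
    (hrec : ∀ n : ℕ, 1 ≤ n →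
      2 * y (n + 1) = 2 * y n + c * (-1 : ℝ) ^ n * φ ^ ((1 : ℤ) - (n : ℤ)))
    (k n : ℕ) (hk : 1 ≤ k) :
    y (2 * n + 1) > y (2 * k) := by
  obtain ⟨j, rfl⟩ : ∃ j, k = j + 1 := ⟨k - 1, by omega⟩
  have hstep : ∀ m, y (m + 1 + 1) = y (m + 1) - c / 2 * (-φ⁻¹) ^ m := by
    intro m
    have := hrec (m + 1) (by omega)
    rw [mul_assoc, neg_one_pow_succ_mul_zpow_one_sub] at this
    linarith
  have := lt_of_succ_eq_sub_mul_pow_of_neg (z := fun m ↦ y (m + 1)) (half_pos c_pos)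
    (neg_neg_of_pos (inv_pos.2 φ_pos)) hstep j n
  simpa [mul_add, add_assoc] using this

theorem stmt6 (y : ℕ → ℝ) (h1 : y 1 = c) (h2 : y 2 = c / 2)
    (hrec : ∀ n : ℕ, 1 ≤ n →
      2 * y (n + 1) = 2 * y n + c * (-1 : ℝ) ^ n * φ ^ ((1 : ℤ) - (n : ℤ)))
    (k n : ℕ) (hk : 1 ≤ k) (hn : 1 ≤ n) :
    y (2 * n + 1) > y (2 * k) :=
  stmt6_general y hrec k n hk
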